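/- arXiv:2604.27227 — 3 statements merged into one kernel-verified Lean document; each statement's English description precedes it below -/
import Mathlib

section
/- Let R = (V, A) be a strongly connected digraph that is walk-Helly, and let (u,v) be an authorized arc of R (u ≠ v). Then the digraph R′ = (V, A ∪ {(u,v)}) obtained by adding the arc (u,v) to R is walk-Helly. -/
/-! Common definitions: temporal (di)graphs, journeys, footprints,
closed walks, the walk-Helly property, tree representations, etc. -/

variable {V : Type*}

/-- Underlying undirected simple graph of a digraph given by its arc relation. -/
def underGraph (A : V → V → Prop) : SimpleGraph V where
  Adj u v := u ≠ v ∧ (A u v ∨ A v u)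
  symm := ⟨fun _ _ h => ⟨h.1.symm, h.2.symm⟩⟩
  loopless := ⟨fun _ h => h.1 rfl⟩

/-- Number of connected components of a digraph (components of the underlying graph). -/
noncomputable def numComponents (A : V → V → Prop) : ℕ :=
  Nat.card (underGraph A).ConnectedComponent

/-- A directed circuit: a closed directed walk whose vertices are pairwise
distinct except for the repeated endpoint. -/
def IsCircuit (A : V → V → Prop) (k : ℕ) (w : ℕ → V) : Prop :=
  1 ≤ k ∧ w k = w 0 ∧ (∀ i < k, A (w i) (w (i + 1))) ∧
    ∀ i < k, ∀ j < k, w i = w j → i = j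

/-- A directed feedback vertex set: every circuit contains a vertex of `S`. -/
def IsDFVS (A : V → V → Prop) (S : Set V) : Prop :=
  ∀ (k : ℕ) (w : ℕ → V), IsCircuit A k w → ∃ i < k, w i ∈ S

/-- A valid finite set of temporal arcs: distinct endpoints, positive times. -/
def ValidDiTemporal (E : Finset ((V × V) × ℕ)) : Prop :=
  ∀ e ∈ E, e.1.1 ≠ e.1.2 ∧ 1 ≤ e.2

/-- A (strict) journey from `u` to `v` in a temporal digraph with arc set `E`. -/
def DiJourney (E : Set ((V × V) × ℕ)) (u v : V) : Prop :=
  ∃ (k : ℕ) (w : ℕ → V) (t : ℕ → ℕ),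
    1 ≤ k ∧ w 0 = u ∧ w k = v ∧
    (∀ i < k, ((w i, w (i + 1)), t i) ∈ E) ∧
    (∀ i, i + 1 < k → t i < t (i + 1))

/-- Arcs of the reachability graph of a temporal digraph. -/
def reachArc (E : Set ((V × V) × ℕ)) (u v : V) : Prop :=
  u ≠ v ∧ DiJourney E u v

/-- Arcs of the (directed) footprint of a temporal digraph. -/
def footArc (E : Set ((V × V) × ℕ)) (u v : V) : Prop :=
  ∃ t, ((u, v), t) ∈ E

/-- A valid finite set of undirected temporal edges: non-loop edges, positive times. -/
def ValidTemporal (E : Finset (Sym2 V × ℕ)) : Prop :=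
  ∀ e ∈ E, ¬ e.1.IsDiag ∧ 1 ≤ e.2

/-- A (strict) journey from `u` to `v` in an undirected temporal graph with edge set `E`. -/
def Journey (E : Set (Sym2 V × ℕ)) (u v : V) : Prop :=
  ∃ (k : ℕ) (w : ℕ → V) (t : ℕ → ℕ),
    1 ≤ k ∧ w 0 = u ∧ w k = v ∧
    (∀ i < k, (s(w i, w (i + 1)), t i) ∈ E) ∧
    (∀ i, i + 1 < k → t i < t (i + 1))

/-- The temporal graph with edge set `E` satisfies the request graph `A`. -/
def Satisfies (E : Set (Sym2 V × ℕ)) (A : V → V → Prop) : Prop :=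
  ∀ u v : V, A u v → Journey E u v

/-- Footprint of an undirected temporal graph. -/
def footprint (E : Set (Sym2 V × ℕ)) : SimpleGraph V where
  Adj u v := u ≠ v ∧ ∃ t, (s(u, v), t) ∈ E
  symm := by
    constructor
    intro u v h
    obtain ⟨h1, t, ht⟩ := h
    exact ⟨h1.symm, t, by rwa [Sym2.eq_swap]⟩
  loopless := ⟨fun _ h => h.1 rfl⟩

/-- A tree solution for the request graph `A`: a valid temporal graph satisfying
all the requests and whose footprint is a tree on the whole vertex set. -/
def IsTreeSolution (E : Finset (Sym2 V × ℕ)) (A : V → V → Prop) : Prop :=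
  ValidTemporal E ∧ Satisfies (↑E : Set (Sym2 V × ℕ)) A ∧
    (footprint (↑E : Set (Sym2 V × ℕ))).IsTree

/-- A closed directed walk of length `k ≥ 1` in the digraph `A`. -/
def IsClosedWalk (A : V → V → Prop) (k : ℕ) (w : ℕ → V) : Prop :=
  1 ≤ k ∧ w k = w 0 ∧ ∀ i < k, A (w i) (w (i + 1))

/-- Vertex set of a walk of length `k`. -/
def walkSet (k : ℕ) (w : ℕ → V) : Set V := {x | ∃ i < k, w i = x}

/-- `S` is the vertex set of some closed walk of `A`. -/
def IsWalkSet (A : V → V → Prop) (S : Set V) : Prop :=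
  ∃ (k : ℕ) (w : ℕ → V), IsClosedWalk A k w ∧ S = walkSet k w

/-- The digraph `A` is walk-Helly: every (nonempty) family of vertex sets of
closed walks that pairwise intersect has a common vertex. -/
def WalkHelly (A : V → V → Prop) : Prop :=
  ∀ 𝒮 : Set (Set V), 𝒮.Nonempty → (∀ S ∈ 𝒮, IsWalkSet A S) →
    (∀ S ∈ 𝒮, ∀ S' ∈ 𝒮, (S ∩ S').Nonempty) → (⋂₀ 𝒮).Nonempty

/-- A tree representation of the digraph `A`: a tree on the vertex set such that the
vertex set of every closed walk of `A` induces a connected subgraph. -/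
def IsTreeRep (A : V → V → Prop) (T : SimpleGraph V) : Prop :=
  T.IsTree ∧ ∀ S : Set V, IsWalkSet A S → (T.induce S).Connected

/-- `(u, v)` is an authorized arc of `A`: there is no vertex `x` lying both on a
closed walk through `u` avoiding `v` and on a closed walk through `v` avoiding `u`. -/
def IsAuthorized (A : V → V → Prop) (u v : V) : Prop :=
  ¬ ∃ x : V, (∃ S, IsWalkSet A S ∧ u ∈ S ∧ x ∈ S ∧ v ∉ S) ∧
             (∃ S, IsWalkSet A S ∧ v ∈ S ∧ x ∈ S ∧ u ∉ S)

/-- The undirected graph of forced edges of `A` (pairs with arcs in both directions). -/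
def forcedGraph (A : V → V → Prop) : SimpleGraph V where
  Adj u v := u ≠ v ∧ A u v ∧ A v u
  symm := ⟨fun _ _ h => ⟨h.1.symm, h.2.2, h.2.1⟩⟩
  loopless := ⟨fun _ h => h.1 rfl⟩


/-!
On a finite digraph a set is the vertex set of a closed walk iff it is nonempty and strongly
connected in the subdigraph it induces (`isWalkSet_iff`), so everything reduces to paths. Let `A'`
be `A` plus the arc `uv`. A closed walk of `A'` missing `u` or `v` is one of `A`, and inside a
closed walk of `A'` through both, every vertex is reached from `v` and reaches `u` by `A`-paths.
By authorization, a pairwise intersecting family cannot have both a member containing `u` but not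
`v` and one containing `v` but not `u`; reversing all arcs, we may assume there is no member of
the second kind.

Helly for `A`, applied to the members missing `u` or `v` together with all `S ∪ C` (`S` a member
through `u` and `v`, `C` a closed walk of `A` through `u` and `v`), gives a vertex `y`. If some
member through `u` and `v` misses `y`, then every `u`-`v` path of `A` passes through `y`, and
comparing that member with one missing both `u` and `v` puts `y` on a closed walk of `A` through
`u` avoiding `v`, or through `v` avoiding `u`; by authorization only one of them, say through
`p ∈ {u, v}`. Then in each member `S` through `u` and `v`, the closed `A`-walks inside `S` through
`p` meet every member missing `u` and `v`; their union is again a closed walk, and Helly applied to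
these unions and the members missing `u` or `v` gives the common vertex.
-/

open Relation Function Set

namespace Relation

variable {α : Type*} {r : α → α → Prop} {P Q : Set α} {a b w y : α}

def induce (r : α → α → Prop) (P : Set α) : α → α → Prop :=
  fun a b => r a b ∧ a ∈ P ∧ b ∈ P

lemma induce_mono (h : P ⊆ Q) : induce r P ≤ induce r Q :=
  fun _ _ ⟨hr, ha, hb⟩ => ⟨hr, h ha, h hb⟩

lemma induce_swap : induce (swap r) P = swap (induce r P) := by
  ext a b
  exact and_congr_right' and_comm

lemma reflTransGen_induce_swap :
    ReflTransGen (induce (swap r) P) a b ↔ ReflTransGen (induce r P) b a := by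
  rw [induce_swap, reflTransGen_swap]

lemma transGen_induce_swap :
    TransGen (induce (swap r) P) a b ↔ TransGen (induce r P) b a := by
  rw [induce_swap, transGen_swap]

lemma ReflTransGen.induce_mem (h : ReflTransGen (induce r P) a b) (ha : a ∈ P) : b ∈ P := by
  rcases h.cases_tail with rfl | ⟨_, -, hb⟩
  exacts [ha, hb.2.2]

lemma ReflTransGen.induce_compl_or (h : ReflTransGen r a b) (ha : a ≠ w) :
    ReflTransGen (induce r {w}ᶜ) a b ∨ ReflTransGen r a w := by
  induction h with
  | refl => exact .inl .refl
  | @tail x y hax hxy ih =>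
    rcases ih with ih | ih
    · by_cases hy : y = w
      · exact .inr (hy ▸ hax.tail hxy)
      · exact .inl (ih.tail ⟨hxy, ih.induce_mem ha, hy⟩)
    · exact .inr ih

lemma ReflTransGen.induce_compl_or' (h : ReflTransGen r a b) (hb : b ≠ w) :
    ReflTransGen (induce r {w}ᶜ) a b ∨ ReflTransGen r w b := by
  simpa only [reflTransGen_induce_swap, reflTransGen_swap] using
    (reflTransGen_swap.mpr h).induce_compl_or hb

lemma ReflTransGen.induce_compl_of_not (h : ReflTransGen r a b) (hay : a ≠ y) (hyb : y ≠ b)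
    (hblock : ¬ReflTransGen (induce r {y}ᶜ) a b) : ReflTransGen (induce r {b}ᶜ) a y := by
  induction h using ReflTransGen.head_induction_on with
  | refl => exact absurd .refl hblock
  | @head a c hac _ ih =>
    have hab : a ≠ b := fun e => hblock (e ▸ .refl)
    by_cases hcy : c = y
    · exact .single ⟨hcy ▸ hac, hab, hcy ▸ hyb⟩
    · have hblock' : ¬ReflTransGen (induce r {y}ᶜ) c b :=
        fun hcb => hblock (hcb.head ⟨hac, hay, hcy⟩)
      have hcb : c ≠ b := fun e => hblock' (e ▸ .refl)
      exact (ih hcy hblock').head ⟨hac, hab, hcb⟩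

lemma ReflTransGen.induce_compl_of_not' (h : ReflTransGen r a b) (hay : a ≠ y) (hyb : y ≠ b)
    (hblock : ¬ReflTransGen (induce r {y}ᶜ) a b) : ReflTransGen (induce r {a}ᶜ) y b := by
  rw [← reflTransGen_induce_swap] at hblock ⊢
  exact (reflTransGen_swap.mpr h).induce_compl_of_not hyb.symm hay.symm hblock

end Relation

section Walks

variable {A : V → V → Prop} {S T : Set V} {a b c x y : V}

lemma IsWalkSet.nonempty (hS : IsWalkSet A S) : S.Nonempty := by
  obtain ⟨k, w, ⟨hk, -, -⟩, rfl⟩ := hS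
  exact ⟨w 0, 0, hk, rfl⟩

lemma IsWalkSet.transGen (hS : IsWalkSet A S) (hx : x ∈ S) (hy : y ∈ S) :
    TransGen (induce A S) x y := by
  obtain ⟨k, w, ⟨hk, hwk, hstep⟩, rfl⟩ := hS
  have hmem : ∀ i ≤ k, w i ∈ walkSet k w := fun i hi =>
    hi.lt_or_eq.elim (fun h => ⟨i, h, rfl⟩) (fun h => ⟨0, hk, h ▸ hwk.symm⟩)
  have hpath : ∀ i j, i ≤ j → j ≤ k → ReflTransGen (induce A (walkSet k w)) (w i) (w j) :=
    fun i j hij hjk => ReflTransGen.lift w (fun _ _ h => h) i j <|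
      reflTransGen_of_succ_of_le (fun i j => induce A (walkSet k w) (w i) (w j))
        (fun l hl => ⟨hstep l (by grind), hmem l (by grind), hmem (l + 1) (by grind)⟩) hij
  obtain ⟨i, hi, rfl⟩ := hx
  obtain ⟨j, hj, rfl⟩ := hy
  have hik : TransGen (induce A (walkSet k w)) (w i) (w k) :=
    .head' ⟨hstep i hi, hmem i hi.le, hmem (i + 1) hi⟩ (hpath (i + 1) k hi le_rfl)
  rw [hwk] at hik
  exact hik.trans_left (hpath 0 j (Nat.zero_le j) hj.le)

/-- `A` has a walk from `a` to `b` whose vertices, the final one excluded, form `T`. -/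
def HasWalk (A : V → V → Prop) (a b : V) (T : Set V) : Prop :=
  ∃ n w, w 0 = a ∧ w n = b ∧ (∀ i < n, A (w i) (w (i + 1))) ∧ T = walkSet n w

lemma hasWalk_refl (a : V) : HasWalk A a a ∅ :=
  ⟨0, fun _ => a, rfl, rfl, fun _ h => absurd h (Nat.not_lt_zero _), by simp [walkSet]⟩

lemma HasWalk.tail (h : HasWalk A a b T) (hbc : A b c) : HasWalk A a c (insert b T) := by
  classical
  obtain ⟨n, w, h0, hn, hstep, rfl⟩ := h
  refine ⟨n + 1, update w (n + 1) c, by simpa using h0, by simp, fun i hi => ?_, ?_⟩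
  · rcases Nat.lt_succ_iff_lt_or_eq.mp hi with hi | rfl
    · rw [update_of_ne (by omega), update_of_ne (by omega)]
      exact hstep i hi
    · rw [update_self, update_of_ne (by omega), hn]
      exact hbc
  · ext x
    simp only [walkSet, mem_insert_iff, mem_ofPred_eq]
    constructor
    · rintro (rfl | ⟨i, hi, rfl⟩)
      · exact ⟨n, by omega, by rw [update_of_ne (by omega), hn]⟩
      · exact ⟨i, by omega, update_of_ne (by omega) _ _⟩
    · rintro ⟨i, hi, rfl⟩
      rw [update_of_ne (by omega)]
      rcases Nat.lt_succ_iff_lt_or_eq.mp hi with hi | rfl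
      exacts [.inr ⟨i, hi, rfl⟩, .inl hn]

lemma HasWalk.tail_transGen (h : HasWalk A a b T) (hT : T ⊆ S) (hbc : TransGen (induce A S) b c) :
    ∃ T', insert b T ⊆ T' ∧ T' ⊆ S ∧ HasWalk A a c T' := by
  induction hbc with
  | single hbc => exact ⟨insert b T, subset_rfl, insert_subset hbc.2.1 hT, h.tail hbc.1⟩
  | @tail d c _ hdc ih =>
    obtain ⟨T', hbT', hT'S, h'⟩ := ih
    exact ⟨insert d T', hbT'.trans (subset_insert _ _), insert_subset hdc.2.1 hT'S, h'.tail hdc.1⟩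

lemma HasWalk.isWalkSet (h : HasWalk A a a T) (hT : T.Nonempty) : IsWalkSet A T := by
  obtain ⟨n, w, h0, hn, hstep, rfl⟩ := h
  obtain ⟨_, i, hi, -⟩ := hT
  exact ⟨n, w, ⟨by omega, hn.trans h0.symm, hstep⟩, rfl⟩

lemma isWalkSet_of_transGen [Finite V] (hne : S.Nonempty)
    (h : ∀ x ∈ S, ∀ y ∈ S, TransGen (induce A S) x y) : IsWalkSet A S := by
  classical
  obtain ⟨x, hx⟩ := hne
  -- extend a closed walk at `x` by a detour `x → y → x` for each `y ∈ S`
  have hcover : ∀ F : Finset V, ↑F ⊆ S → ∃ T, ↑F ⊆ T ∧ T ⊆ S ∧ HasWalk A x x T := by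
    intro F
    induction F using Finset.induction_on with
    | empty => exact fun _ => ⟨∅, by simp, empty_subset S, hasWalk_refl x⟩
    | insert y F _ ih =>
      rw [Finset.coe_insert, insert_subset_iff]
      rintro ⟨hy, hF⟩
      obtain ⟨T, hFT, hTS, hxx⟩ := ih hF
      obtain ⟨T₁, hTT₁, hT₁S, hxy⟩ := hxx.tail_transGen hTS (h x hx y hy)
      obtain ⟨T₂, hT₁T₂, hT₂S, hxx'⟩ := hxy.tail_transGen hT₁S (h y hy x hx)
      refine ⟨T₂, insert_subset_iff.mpr ⟨hT₁T₂ (mem_insert y T₁), ?_⟩, hT₂S, hxx'⟩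
      exact hFT.trans <| (subset_insert x T).trans <| hTT₁.trans <| (subset_insert y T₁).trans hT₁T₂
  obtain ⟨T, hST, hTS, hxx⟩ := hcover (toFinite S).toFinset (by simp)
  rw [Finite.coe_toFinset] at hST
  rw [← hST.antisymm hTS] at hxx
  exact hxx.isWalkSet ⟨x, hx⟩

theorem isWalkSet_iff [Finite V] :
    IsWalkSet A S ↔ S.Nonempty ∧ ∀ x ∈ S, ∀ y ∈ S, TransGen (induce A S) x y :=
  ⟨fun hS => ⟨hS.nonempty, fun _ hx _ hy => hS.transGen hx hy⟩,
    fun h => isWalkSet_of_transGen h.1 h.2⟩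

lemma IsWalkSet.reflTransGen (hS : IsWalkSet A S) (hx : x ∈ S) (hy : y ∈ S) :
    ReflTransGen (induce A S) x y :=
  (hS.transGen hx hy).to_reflTransGen

lemma isWalkSet_of_reflTransGen [Finite V] (hab : a ≠ b) (ha : a ∈ S) (hb : b ∈ S)
    (h : ∀ x ∈ S, ∀ y ∈ S, ReflTransGen (induce A S) x y) : IsWalkSet A S := by
  have hab' : TransGen (induce A S) a b :=
    (reflTransGen_iff_eq_or_transGen.mp (h a ha b hb)).resolve_left hab.symm
  exact isWalkSet_of_transGen ⟨a, ha⟩ fun x hx y hy =>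
    (TransGen.trans_right (h x hx a ha) hab').trans_left (h b hb y hy)

lemma exists_isWalkSet_of_cycle [Finite V] {P : Set V} (hab : a ≠ b)
    (h₁ : ReflTransGen (induce A P) a b) (h₂ : ReflTransGen (induce A P) b a) :
    ∃ W, IsWalkSet A W ∧ W ⊆ P ∧ a ∈ W ∧ b ∈ W := by
  -- the strong component of `a` in `P`: a path between two of its vertices never leaves it
  let K := {x | ReflTransGen (induce A P) a x ∧ ReflTransGen (induce A P) x a}
  have haP : a ∈ P := by
    obtain ⟨c, hac, -⟩ := h₁.cases_head.resolve_left hab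
    exact hac.2.1
  have hlift : ∀ {x y}, x ∈ K → ReflTransGen (induce A P) x y → ReflTransGen (induce A P) y a →
      ReflTransGen (induce A K) x y := by
    intro x y hx hxy hya
    induction hxy with
    | refl => exact .refl
    | @tail w y hxw hwy ih =>
      have hwa := ReflTransGen.head hwy hya
      exact (ih hwa).tail ⟨hwy.1, ⟨hx.1.trans hxw, hwa⟩, ⟨(hx.1.trans hxw).tail hwy, hya⟩⟩
  have haK : a ∈ K := ⟨.refl, .refl⟩
  have hbK : b ∈ K := ⟨h₁, h₂⟩
  exact ⟨K, isWalkSet_of_reflTransGen hab haK hbK fun x hx y hy =>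
    hlift hx (hx.2.trans hy.1) hy.2, fun x hx => hx.1.induce_mem haP, haK, hbK⟩

lemma isWalkSet_sUnion [Finite V] {F : Set (Set V)} {p : V} (hF : F.Nonempty)
    (h : ∀ W ∈ F, IsWalkSet A W ∧ p ∈ W) : IsWalkSet A (⋃₀ F) := by
  obtain ⟨W₀, hW₀⟩ := hF
  refine isWalkSet_of_transGen ⟨p, W₀, hW₀, (h W₀ hW₀).2⟩ ?_
  rintro x ⟨W, hW, hx⟩ y ⟨W', hW', hy⟩
  have hmono : ∀ {W}, W ∈ F → induce A W ≤ induce A (⋃₀ F) :=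
    fun hW => induce_mono (subset_sUnion_of_mem hW)
  exact (TransGen.mono (hmono hW) _ _ ((h W hW).1.transGen hx (h W hW).2)).trans
    (TransGen.mono (hmono hW') _ _ ((h W' hW').1.transGen (h W' hW').2 hy))

lemma isWalkSet_swap_iff [Finite V] : IsWalkSet (swap A) S ↔ IsWalkSet A S := by
  simp only [isWalkSet_iff, transGen_induce_swap]
  exact and_congr_right fun _ => ⟨fun h x hx y hy => h y hy x hx, fun h x hx y hy => h y hy x hx⟩

lemma WalkHelly.swap [Finite V] (hH : WalkHelly A) : WalkHelly (swap A) :=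
  fun 𝒮 hne hws hpair => hH 𝒮 hne (fun S hS => isWalkSet_swap_iff.mp (hws S hS)) hpair

lemma WalkHelly.exists_mem_of_union (hH : WalkHelly A) {𝒮 𝒯 : Set (Set V)} (hne : 𝒮.Nonempty)
    (h𝒮 : ∀ S ∈ 𝒮, IsWalkSet A S) (h𝒯 : ∀ T ∈ 𝒯, IsWalkSet A T)
    (h𝒮𝒮 : ∀ S ∈ 𝒮, ∀ S' ∈ 𝒮, (S ∩ S').Nonempty) (h𝒮𝒯 : ∀ S ∈ 𝒮, ∀ T ∈ 𝒯, (S ∩ T).Nonempty)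
    (h𝒯𝒯 : ∀ T ∈ 𝒯, ∀ T' ∈ 𝒯, (T ∩ T').Nonempty) :
    ∃ q, (∀ S ∈ 𝒮, q ∈ S) ∧ ∀ T ∈ 𝒯, q ∈ T := by
  obtain ⟨q, hq⟩ := hH (𝒮 ∪ 𝒯) (hne.mono subset_union_left)
    (by rintro S (hS | hS); exacts [h𝒮 S hS, h𝒯 S hS])
    (by
      rintro S (hS | hS) S' (hS' | hS')
      · exact h𝒮𝒮 S hS S' hS'
      · exact h𝒮𝒯 S hS S' hS'
      · exact inter_comm S' S ▸ h𝒮𝒯 S' hS' S hS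
      · exact h𝒯𝒯 S hS S' hS')
  exact ⟨q, fun S hS => hq S (.inl hS), fun T hT => hq T (.inr hT)⟩

/-- `IsAuthorized A u v` says that no `x` satisfies both `OnClosedWalkAvoiding A u x v` and
`OnClosedWalkAvoiding A v x u`. -/
def OnClosedWalkAvoiding (A : V → V → Prop) (a x b : V) : Prop :=
  ∃ S, IsWalkSet A S ∧ a ∈ S ∧ x ∈ S ∧ b ∉ S

lemma onClosedWalkAvoiding_of_cycle [Finite V] (hax : a ≠ x)
    (h₁ : ReflTransGen (induce A {b}ᶜ) a x) (h₂ : ReflTransGen (induce A {b}ᶜ) x a) :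
    OnClosedWalkAvoiding A a x b := by
  obtain ⟨W, hW, hWb, ha, hx⟩ := exists_isWalkSet_of_cycle hax h₁ h₂
  exact ⟨W, hW, ha, hx, fun hb => hWb hb rfl⟩

lemma IsAuthorized.swap [Finite V] {u v : V} (h : IsAuthorized A u v) :
    IsAuthorized (swap A) v u := by
  rintro ⟨x, ⟨S, hS, hv, hx, hu⟩, ⟨S', hS', hu', hx', hv'⟩⟩
  rw [isWalkSet_swap_iff] at hS hS'
  exact h ⟨x, ⟨S', hS', hu', hx', hv'⟩, ⟨S, hS, hv, hx, hu⟩⟩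

end Walks

section AddArc

variable {A : V → V → Prop} {u v y z : V} {S T C : Set V} {𝒮 : Set (Set V)}

def addArc (A : V → V → Prop) (u v : V) : V → V → Prop :=
  fun a b => A a b ∨ (a = u ∧ b = v)

lemma addArc_swap : addArc (swap A) v u = swap (addArc A u v) := by
  funext a b
  exact propext (or_congr_right and_comm)

lemma IsWalkSet.of_addArc [Finite V] (hS : IsWalkSet (addArc A u v) S) (h : u ∉ S ∨ v ∉ S) :
    IsWalkSet A S := by
  rw [isWalkSet_iff] at hS ⊢
  refine ⟨hS.1, fun x hx y hy => TransGen.mono ?_ _ _ (hS.2 x hx y hy)⟩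
  rintro a b ⟨hA | ⟨rfl, rfl⟩, ha, hb⟩
  · exact ⟨hA, ha, hb⟩
  · exact (h.elim (· ha) (· hb)).elim

/-- The only new arc ends at `v`, so a path from `v` can restart at `v` whenever it uses it. -/
lemma IsWalkSet.addArc_head (hS : IsWalkSet (addArc A u v) S) (hv : v ∈ S) (hz : z ∈ S) :
    ReflTransGen (induce A S) v z := by
  induction hS.reflTransGen hv hz with
  | refl => exact .refl
  | tail _ hcz ih =>
    obtain ⟨hA | ⟨-, rfl⟩, hc, hz⟩ := hcz
    exacts [(ih hc).tail ⟨hA, hc, hz⟩, .refl]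

lemma IsWalkSet.addArc_tail (hS : IsWalkSet (addArc A u v) S) (hu : u ∈ S) (hz : z ∈ S) :
    ReflTransGen (induce A S) z u := by
  induction hS.reflTransGen hz hu using ReflTransGen.head_induction_on with
  | refl => exact .refl
  | head hzc _ ih =>
    obtain ⟨hA | ⟨rfl, -⟩, hz, hc⟩ := hzc
    exacts [(ih hc).head ⟨hA, hz, hc⟩, .refl]

lemma IsWalkSet.union_of_addArc [Finite V] (huv : u ≠ v) (hS : IsWalkSet (addArc A u v) S)
    (hu : u ∈ S) (hv : v ∈ S) (hC : IsWalkSet A C) (huC : u ∈ C) (hvC : v ∈ C) :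
    IsWalkSet A (S ∪ C) := by
  have hS' : induce A S ≤ induce A (S ∪ C) := induce_mono subset_union_left
  have hC' : induce A C ≤ induce A (S ∪ C) := induce_mono subset_union_right
  have hto : ∀ x ∈ S ∪ C, ReflTransGen (induce A (S ∪ C)) x u := by
    rintro x (hx | hx)
    exacts [ReflTransGen.mono hS' _ _ (hS.addArc_tail hu hx),
      ReflTransGen.mono hC' _ _ (hC.reflTransGen hx huC)]
  have hfrom : ∀ x ∈ S ∪ C, ReflTransGen (induce A (S ∪ C)) u x := by
    rintro x (hx | hx)
    exacts [(ReflTransGen.mono hC' _ _ (hC.reflTransGen huC hvC)).trans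
        (ReflTransGen.mono hS' _ _ (hS.addArc_head hv hx)),
      ReflTransGen.mono hC' _ _ (hC.reflTransGen huC hx)]
  exact isWalkSet_of_reflTransGen huv (.inl hu) (.inl hv) fun x hx y hy =>
    (hto x hx).trans (hfrom y hy)

lemma IsAuthorized.forall_mem_imp_or [Finite V] (hauth : IsAuthorized A u v)
    (hws : ∀ S ∈ 𝒮, IsWalkSet (addArc A u v) S) (hpair : ∀ S ∈ 𝒮, ∀ S' ∈ 𝒮, (S ∩ S').Nonempty) :
    (∀ S ∈ 𝒮, v ∈ S → u ∈ S) ∨ ∀ S ∈ 𝒮, u ∈ S → v ∈ S := by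
  by_contra! h
  obtain ⟨⟨S, hS, hvS, huS⟩, ⟨S', hS', huS', hvS'⟩⟩ := h
  obtain ⟨x, hxS', hxS⟩ := hpair S' hS' S hS
  exact hauth ⟨x, ⟨S', (hws S' hS').of_addArc (.inr hvS'), huS', hxS', hvS'⟩,
    ⟨S, (hws S hS).of_addArc (.inl huS), hvS, hxS, huS⟩⟩

lemma exists_mem_missing_and_separates [Finite V] (hH : WalkHelly A) (huv : u ≠ v)
    (hws : ∀ S ∈ 𝒮, IsWalkSet (addArc A u v) S) (hpair : ∀ S ∈ 𝒮, ∀ S' ∈ 𝒮, (S ∩ S').Nonempty)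
    (hT : ∃ T ∈ 𝒮, u ∉ T ∨ v ∉ T) :
    ∃ y, (∀ S ∈ 𝒮, u ∉ S ∨ v ∉ S → y ∈ S) ∧
      ∀ S ∈ 𝒮, u ∈ S → v ∈ S → y ∉ S → ¬ReflTransGen (induce A {y}ᶜ) u v := by
  obtain ⟨y, hyX, hyB⟩ := hH.exists_mem_of_union (𝒮 := {X ∈ 𝒮 | u ∉ X ∨ v ∉ X})
    (𝒯 := image2 (· ∪ ·) {S ∈ 𝒮 | u ∈ S ∧ v ∈ S} {C | IsWalkSet A C ∧ u ∈ C ∧ v ∈ C}) hT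
    (fun X hX => (hws X hX.1).of_addArc hX.2)
    (by
      rintro _ ⟨S, ⟨hS, hu, hv⟩, C, ⟨hC, huC, hvC⟩, rfl⟩
      exact (hws S hS).union_of_addArc huv hu hv hC huC hvC)
    (fun X hX X' hX' => hpair X hX.1 X' hX'.1)
    (by
      rintro X hX _ ⟨S, ⟨hS, -⟩, C, -, rfl⟩
      exact (hpair X hX.1 S hS).mono (inter_subset_inter_right _ subset_union_left))
    (by
      rintro _ ⟨S, ⟨-, hu, -⟩, C, -, rfl⟩ _ ⟨S', ⟨-, hu', -⟩, C', -, rfl⟩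
      exact ⟨u, .inl hu, .inl hu'⟩)
  refine ⟨y, fun S hS h => hyX S ⟨hS, h⟩, fun S hS hu hv hyS huv' => ?_⟩
  have hvu : ReflTransGen (induce A {y}ᶜ) v u :=
    ReflTransGen.mono (induce_mono (subset_compl_singleton_iff.mpr hyS)) _ _
      ((hws S hS).addArc_tail hu hv)
  obtain ⟨C, hC, hCy, huC, hvC⟩ := exists_isWalkSet_of_cycle huv huv' hvu
  rcases hyB _ (mem_image2_of_mem ⟨hS, hu, hv⟩ ⟨hC, huC, hvC⟩) with h | h
  exacts [hyS h, hCy h rfl]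

lemma onClosedWalkAvoiding_head_or [Finite V] (hreach : ReflTransGen A u v)
    (hws : ∀ S ∈ 𝒮, IsWalkSet (addArc A u v) S) (hyX : ∀ S ∈ 𝒮, u ∉ S ∨ v ∉ S → y ∈ S)
    (hblock : ¬ReflTransGen (induce A {y}ᶜ) u v) (hS : S ∈ 𝒮) (hv : v ∈ S)
    (hT : T ∈ 𝒮) (huT : u ∉ T) (hvT : v ∉ T) (hz : z ∈ S ∩ T) :
    OnClosedWalkAvoiding A v y u ∨ ReflTransGen (induce A S) u z := by
  have hyT : y ∈ T := hyX T hT (.inl huT)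
  have hTu : induce A T ≤ induce A {u}ᶜ := induce_mono (subset_compl_singleton_iff.mpr huT)
  refine (((hws S hS).addArc_head hv hz.1).induce_compl_or'
    fun h : z = u => huT (h ▸ hz.2)).imp (fun hvz => ?_) id
  exact onClosedWalkAvoiding_of_cycle (fun h => hvT (h ▸ hyT))
    ((ReflTransGen.mono (fun _ _ h => ⟨h.1.1, h.2⟩) _ _ hvz).trans
      (ReflTransGen.mono hTu _ _ (((hws T hT).of_addArc (.inl huT)).reflTransGen hz.2 hyT)))
    (hreach.induce_compl_of_not' (fun h => huT (h ▸ hyT)) (fun h => hvT (h ▸ hyT)) hblock)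

lemma onClosedWalkAvoiding_tail_or [Finite V] (hreach : ReflTransGen A u v)
    (hws : ∀ S ∈ 𝒮, IsWalkSet (addArc A u v) S) (hyX : ∀ S ∈ 𝒮, u ∉ S ∨ v ∉ S → y ∈ S)
    (hblock : ¬ReflTransGen (induce A {y}ᶜ) u v) (hS : S ∈ 𝒮) (hu : u ∈ S)
    (hT : T ∈ 𝒮) (huT : u ∉ T) (hvT : v ∉ T) (hz : z ∈ S ∩ T) :
    OnClosedWalkAvoiding A u y v ∨ ReflTransGen (induce A S) z v := by
  have hyT : y ∈ T := hyX T hT (.inl huT)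
  have hTv : induce A T ≤ induce A {v}ᶜ := induce_mono (subset_compl_singleton_iff.mpr hvT)
  refine (((hws S hS).addArc_tail hu hz.1).induce_compl_or
    fun h : z = v => hvT (h ▸ hz.2)).imp (fun hzu => ?_) id
  exact onClosedWalkAvoiding_of_cycle (fun h => huT (h ▸ hyT))
    (hreach.induce_compl_of_not (fun h => huT (h ▸ hyT)) (fun h => hvT (h ▸ hyT)) hblock)
    ((ReflTransGen.mono hTv _ _ (((hws T hT).of_addArc (.inl huT)).reflTransGen hyT hz.2)).trans
      (ReflTransGen.mono (fun _ _ h => ⟨h.1.1, h.2⟩) _ _ hzu))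

lemma onClosedWalkAvoiding_or [Finite V] {S₀ T₀ : Set V} (hreach : ReflTransGen A u v)
    (hws : ∀ S ∈ 𝒮, IsWalkSet (addArc A u v) S) (hyX : ∀ S ∈ 𝒮, u ∉ S ∨ v ∉ S → y ∈ S)
    (hblock : ¬ReflTransGen (induce A {y}ᶜ) u v) (hpair : ∀ S ∈ 𝒮, ∀ S' ∈ 𝒮, (S ∩ S').Nonempty)
    (hS₀ : S₀ ∈ 𝒮) (huS₀ : u ∈ S₀) (hvS₀ : v ∈ S₀) (hyS₀ : y ∉ S₀)
    (hT₀ : T₀ ∈ 𝒮) (huT₀ : u ∉ T₀) (hvT₀ : v ∉ T₀) :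
    OnClosedWalkAvoiding A u y v ∨ OnClosedWalkAvoiding A v y u := by
  obtain ⟨z, hz⟩ := hpair S₀ hS₀ T₀ hT₀
  rcases onClosedWalkAvoiding_head_or hreach hws hyX hblock hS₀ hvS₀ hT₀ huT₀ hvT₀ hz
    with hZv | huz
  · exact .inr hZv
  rcases onClosedWalkAvoiding_tail_or hreach hws hyX hblock hS₀ huS₀ hT₀ huT₀ hvT₀ hz
    with hZu | hzv
  · exact .inl hZu
  -- the path `u → z → v` inside `S₀` avoids `y`
  exact absurd (ReflTransGen.mono (induce_mono (subset_compl_singleton_iff.mpr hyS₀)) _ _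
    (huz.trans hzv)) hblock

lemma sInter_nonempty_of_cycles_through [Finite V] {p : V} {T₀ : Set V} (hH : WalkHelly A)
    (hws : ∀ S ∈ 𝒮, IsWalkSet (addArc A u v) S) (hpair : ∀ S ∈ 𝒮, ∀ S' ∈ 𝒮, (S ∩ S').Nonempty)
    (hT₀ : T₀ ∈ 𝒮) (huT₀ : u ∉ T₀) (hvT₀ : v ∉ T₀) (hp : p = u ∨ p = v)
    (hpX : ∀ X ∈ 𝒮, u ∈ X ∨ v ∈ X → p ∈ X)
    (hcyc : ∀ S ∈ 𝒮, u ∈ S → v ∈ S → ∀ T ∈ 𝒮, u ∉ T → v ∉ T → ∀ z ∈ S ∩ T,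
      ReflTransGen (induce A S) p z ∧ ReflTransGen (induce A S) z p) :
    (⋂₀ 𝒮).Nonempty := by
  let core : Set V → Set V := fun S => ⋃₀ {W | IsWalkSet A W ∧ W ⊆ S ∧ p ∈ W}
  have hmeet : ∀ S ∈ 𝒮, u ∈ S → v ∈ S → ∀ T ∈ 𝒮, u ∉ T → v ∉ T → (core S ∩ T).Nonempty := by
    intro S hS hu hv T hT huT hvT
    obtain ⟨z, hz⟩ := hpair S hS T hT
    have hpz : p ≠ z := by rintro rfl; rcases hp with rfl | rfl; exacts [huT hz.2, hvT hz.2]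
    obtain ⟨hpz', hzp⟩ := hcyc S hS hu hv T hT huT hvT z hz
    obtain ⟨W, hW, hWS, hpW, hzW⟩ := exists_isWalkSet_of_cycle hpz hpz' hzp
    exact ⟨z, ⟨W, ⟨hW, hWS, hpW⟩, hzW⟩, hz.2⟩
  have hcore : ∀ S ∈ 𝒮, u ∈ S → v ∈ S → IsWalkSet A (core S) ∧ p ∈ core S := by
    intro S hS hu hv
    obtain ⟨z, ⟨W, hW, -⟩, -⟩ := hmeet S hS hu hv T₀ hT₀ huT₀ hvT₀
    exact ⟨isWalkSet_sUnion ⟨W, hW⟩ fun W hW => ⟨hW.1, hW.2.2⟩, W, hW, hW.2.2⟩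
  obtain ⟨q, hqX, hqcore⟩ := hH.exists_mem_of_union (𝒮 := {X ∈ 𝒮 | u ∉ X ∨ v ∉ X})
    (𝒯 := core '' {S ∈ 𝒮 | u ∈ S ∧ v ∈ S}) ⟨T₀, hT₀, .inl huT₀⟩
    (fun X hX => (hws X hX.1).of_addArc hX.2)
    (by rintro _ ⟨S, ⟨hS, hu, hv⟩, rfl⟩; exact (hcore S hS hu hv).1)
    (fun X hX X' hX' => hpair X hX.1 X' hX'.1)
    (by
      rintro X ⟨hX, -⟩ _ ⟨S, ⟨hS, hu, hv⟩, rfl⟩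
      by_cases h : u ∈ X ∨ v ∈ X
      · exact ⟨p, hpX X hX h, (hcore S hS hu hv).2⟩
      · push Not at h
        exact inter_comm (core S) X ▸ hmeet S hS hu hv X hX h.1 h.2)
    (by
      rintro _ ⟨S, ⟨hS, hu, hv⟩, rfl⟩ _ ⟨S', ⟨hS', hu', hv'⟩, rfl⟩
      exact ⟨p, (hcore S hS hu hv).2, (hcore S' hS' hu' hv').2⟩)
  refine ⟨q, fun S hS => ?_⟩
  by_cases h : u ∈ S ∧ v ∈ S
  · obtain ⟨W, ⟨-, hWS, -⟩, hqW⟩ := hqcore _ (mem_image_of_mem core ⟨hS, h⟩)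
    exact hWS hqW
  · exact hqX S ⟨hS, not_and_or.mp h⟩

lemma sInter_nonempty_of_forall_mem_imp [Finite V] (hreach : ReflTransGen A u v)
    (hH : WalkHelly A) (huv : u ≠ v) (hauth : IsAuthorized A u v)
    (hws : ∀ S ∈ 𝒮, IsWalkSet (addArc A u v) S) (hpair : ∀ S ∈ 𝒮, ∀ S' ∈ 𝒮, (S ∩ S').Nonempty)
    (hV : ∀ S ∈ 𝒮, v ∈ S → u ∈ S) :
    (⋂₀ 𝒮).Nonempty := by
  by_cases hN : ∃ T ∈ 𝒮, u ∉ T ∧ v ∉ T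
  swap
  · push Not at hN
    exact ⟨u, fun S hS => by_contra fun hu => hu (hV S hS (hN S hS hu))⟩
  obtain ⟨T₀, hT₀, huT₀, hvT₀⟩ := hN
  obtain ⟨y, hyX, hsep⟩ :=
    exists_mem_missing_and_separates hH huv hws hpair ⟨T₀, hT₀, .inl huT₀⟩
  by_cases hyB : ∀ S ∈ 𝒮, u ∈ S → v ∈ S → y ∈ S
  · refine ⟨y, fun S hS => ?_⟩
    by_cases h : u ∈ S ∧ v ∈ S
    exacts [hyB S hS h.1 h.2, hyX S hS (not_and_or.mp h)]
  push Not at hyB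
  obtain ⟨S₀, hS₀, huS₀, hvS₀, hyS₀⟩ := hyB
  have hblock := hsep S₀ hS₀ huS₀ hvS₀ hyS₀
  rcases onClosedWalkAvoiding_or hreach hws hyX hblock hpair hS₀ huS₀ hvS₀ hyS₀ hT₀ huT₀ hvT₀
    with hZu | hZv
  · refine sInter_nonempty_of_cycles_through hH hws hpair hT₀ huT₀ hvT₀ (.inl rfl)
      (fun X hX h => h.elim id (hV X hX)) fun S hS hu hv T hT huT hvT z hz => ⟨?_, ?_⟩
    · exact (onClosedWalkAvoiding_head_or hreach hws hyX hblock hS hv hT huT hvT hz).resolve_left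
        fun hZv => hauth ⟨y, hZu, hZv⟩
    · exact (hws S hS).addArc_tail hu hz.1
  · refine sInter_nonempty_of_cycles_through hH hws hpair hT₀ huT₀ hvT₀ (.inr rfl)
      (fun X hX h => ?_) fun S hS hu hv T hT huT hvT z hz => ⟨?_, ?_⟩
    · by_contra hvX
      exact hauth ⟨y, ⟨X, (hws X hX).of_addArc (.inr hvX), h.resolve_right hvX,
        hyX X hX (.inr hvX), hvX⟩, hZv⟩
    · exact (hws S hS).addArc_head hv hz.1
    · exact (onClosedWalkAvoiding_tail_or hreach hws hyX hblock hS hu hT huT hvT hz).resolve_left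
        fun hZu => hauth ⟨y, hZu, hZv⟩

end AddArc

/-- adding an authorized arc `(u, v)` to a strongly connected walk-Helly
digraph preserves the walk-Helly property. -/
theorem stmt9 {V : Type*} [Fintype V] (A : V → V → Prop)
    (hstrong : ∀ u v : V, Relation.ReflTransGen A u v)
    (hH : WalkHelly A) (u v : V) (huv : u ≠ v)
    (hauth : IsAuthorized A u v) :
    WalkHelly (fun a b => A a b ∨ (a = u ∧ b = v)) := by
  intro 𝒮 _ hws hpair
  rcases hauth.forall_mem_imp_or hws hpair with hV | hU
  · exact sInter_nonempty_of_forall_mem_imp (hstrong u v) hH huv hauth hws hpair hV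
  · refine sInter_nonempty_of_forall_mem_imp (A := swap A) (reflTransGen_swap.mpr (hstrong u v))
      hH.swap huv.symm hauth.swap (fun S hS => ?_) hpair hU
    rw [addArc_swap, isWalkSet_swap_iff]
    exact hws S hS
end

section
/- Let R = (V, A) be a strongly connected digraph on n vertices that is walk-Helly, and suppose that the forced edges of R do not form a spanning tree of V (i.e., it is not the case that there are exactly n − 1 forced edges forming a tree on V). Then there exist distinct vertices u, v such that (u,v) ∉ A and (u,v) is an authorized arc of R. -/
/-! Common definitions: temporal (di)graphs, journeys, footprints,
closed walks, the walk-Helly property, tree representations, etc. -/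

variable {V : Type*}

/-! Closed walks through a common vertex merge into one closed walk, so the vertex sets of closed
walks are closed under unions of meeting sets, and a path of forced edges spans such a set. A cycle
`v u z … v` of forced edges would then give three pairwise meeting walk sets `{v, u}`, `{u, z}` and
`{z, …, v}` with no common vertex; so under walk-Helly the forced graph is a forest.

If `(u, v)` is not authorized, witnessed by walk sets `S₁ ∋ u, x` avoiding `v` and `S₂ ∋ v, x`
avoiding `u`, then Helly applied to `S₁`, `S₂` and all walk sets through `u` and `v` gives a vertex
`y` for which the intersections of the walk sets through `u, y` and through `y, v` are strictly
smaller than the one through `u, v`. Induction on its size shows that authorized pairs connect all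
vertices. If every authorized pair were an arc, then, authorization being symmetric, every
authorized pair would be a forced edge and the forced graph would be a spanning tree. -/

section

variable {A : V → V → Prop}

def walkAppend (k : ℕ) (w w' : ℕ → V) : ℕ → V := fun j => if j < k then w j else w' (j - k)

namespace IsClosedWalk

variable {k k' : ℕ} {w w' : ℕ → V}

lemma adj_mod (h : IsClosedWalk A k w) (i : ℕ) : A (w (i % k)) (w ((i + 1) % k)) := by
  obtain ⟨hk, hclosed, hadj⟩ := h
  have hi : i % k < k := Nat.mod_lt _ hk
  rw [← Nat.mod_add_mod]
  obtain hlt | heq : i % k + 1 < k ∨ i % k + 1 = k := by omega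
  · rw [Nat.mod_eq_of_lt hlt]
    exact hadj _ hi
  · have hlast := hadj _ hi
    rw [heq, hclosed] at hlast
    rwa [heq, Nat.mod_self]

lemma rotate (h : IsClosedWalk A k w) (i₀ : ℕ) :
    IsClosedWalk A k (fun j => w ((j + i₀) % k)) :=
  ⟨h.1, by simp, fun i _ => by simpa only [Nat.add_right_comm i 1 i₀] using h.adj_mod (i + i₀)⟩

lemma walkSet_rotate (h : IsClosedWalk A k w) (i₀ : ℕ) :
    walkSet k (fun j => w ((j + i₀) % k)) = walkSet k w := by
  have hk := h.1
  ext x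
  constructor
  · rintro ⟨j, -, rfl⟩
    exact ⟨(j + i₀) % k, Nat.mod_lt _ hk, rfl⟩
  · rintro ⟨i, hi, rfl⟩
    refine ⟨(i + (k - i₀ % k)) % k, Nat.mod_lt _ hk, ?_⟩
    have hi₀ := Nat.mod_lt i₀ hk
    dsimp only
    congr 1
    rw [Nat.mod_add_mod, ← Nat.add_mod_mod, Nat.add_assoc, Nat.sub_add_cancel hi₀.le,
      Nat.add_mod_right, Nat.mod_eq_of_lt hi]

lemma append (h : IsClosedWalk A k w) (h' : IsClosedWalk A k' w') (h₀ : w 0 = w' 0) :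
    IsClosedWalk A (k + k') (walkAppend k w w') := by
  obtain ⟨hk, hclosed, hadj⟩ := h
  obtain ⟨hk', hclosed', hadj'⟩ := h'
  refine ⟨by omega, ?_, fun i hi => ?_⟩
  · simp [walkAppend, hclosed', h₀]
  · unfold walkAppend
    rcases lt_trichotomy (i + 1) k with hlt | heq | hgt
    · simpa [hlt, (Nat.lt_succ_self i).trans hlt] using hadj i (by omega)
    · simpa [show i < k by omega, heq, hclosed, h₀] using hadj i (by omega)
    · simpa [show ¬ i < k by omega, show ¬ i + 1 < k by omega, Nat.sub_add_comm (by omega : k ≤ i)]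
        using hadj' (i - k) (by omega)

lemma walkSet_append :
    walkSet (k + k') (walkAppend k w w') = walkSet k w ∪ walkSet k' w' := by
  ext x
  simp only [walkSet, walkAppend, Set.mem_ofPred_eq, Set.mem_union]
  constructor
  · rintro ⟨j, hj, rfl⟩
    by_cases hjk : j < k
    · exact Or.inl ⟨j, hjk, by simp [hjk]⟩
    · exact Or.inr ⟨j - k, by omega, by simp [hjk]⟩
  · rintro (⟨i, hi, rfl⟩ | ⟨i, hi, rfl⟩)
    · exact ⟨i, by omega, by simp [hi]⟩
    · exact ⟨k + i, by omega, by simp⟩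

end IsClosedWalk

namespace IsWalkSet

variable {S S' : Set V}

lemma nonempty_s11 (hS : IsWalkSet A S) : S.Nonempty := by
  obtain ⟨k, w, hw, rfl⟩ := hS
  exact ⟨w 0, 0, hw.1, rfl⟩

lemma exists_closedWalk_start (hS : IsWalkSet A S) {a : V} (ha : a ∈ S) :
    ∃ k w, IsClosedWalk A k w ∧ w 0 = a ∧ S = walkSet k w := by
  obtain ⟨k, w, hw, rfl⟩ := hS
  obtain ⟨i₀, hi₀, rfl⟩ := ha
  exact ⟨k, _, hw.rotate i₀, by simp [Nat.mod_eq_of_lt hi₀], (hw.walkSet_rotate i₀).symm⟩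

lemma union (hS : IsWalkSet A S) (hS' : IsWalkSet A S') {a : V} (ha : a ∈ S) (ha' : a ∈ S') :
    IsWalkSet A (S ∪ S') := by
  obtain ⟨k, w, hw, hw₀, rfl⟩ := hS.exists_closedWalk_start ha
  obtain ⟨k', w', hw', hw'₀, rfl⟩ := hS'.exists_closedWalk_start ha'
  exact ⟨k + k', _, hw.append hw' (hw₀.trans hw'₀.symm), IsClosedWalk.walkSet_append.symm⟩

end IsWalkSet

lemma isWalkSet_pair {u v : V} (huv : A u v) (hvu : A v u) : IsWalkSet A {u, v} := by
  refine ⟨2, fun i => if i = 1 then v else u, ⟨by omega, rfl, fun i hi => ?_⟩, ?_⟩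
  · interval_cases i <;> simpa
  · ext x
    simp only [walkSet, Set.mem_ofPred_eq, Set.mem_insert_iff, Set.mem_singleton_iff]
    constructor
    · rintro (rfl | rfl)
      exacts [⟨0, by omega, rfl⟩, ⟨1, by omega, rfl⟩]
    · rintro ⟨i, hi, rfl⟩
      interval_cases i <;> simp

lemma isWalkSet_support_of_not_nil {a b : V} (p : (forcedGraph A).Walk a b) (hp : ¬ p.Nil) :
    IsWalkSet A {x | x ∈ p.support} := by
  induction p with
  | nil => exact absurd .nil hp
  | @cons a c b h q ih =>
    have hpair := isWalkSet_pair h.2.1 h.2.2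
    by_cases hq : q.Nil
    · cases hq
      simpa [Set.insert_def] using hpair
    · have hsupp : {x | x ∈ (SimpleGraph.Walk.cons h q).support} =
          {a, c} ∪ {x | x ∈ q.support} := by
        ext x
        simp only [SimpleGraph.Walk.support_cons, List.mem_cons, Set.mem_union,
          Set.mem_insert_iff, Set.mem_singleton_iff, Set.mem_ofPred_eq]
        have := q.start_mem_support
        grind
      rw [hsupp]
      exact hpair.union (ih hq) (by simp) q.start_mem_support

lemma IsAuthorized.symm {u v : V} (h : IsAuthorized A u v) : IsAuthorized A v u :=
  fun ⟨x, hu, hv⟩ => h ⟨x, hv, hu⟩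

def walkHull (A : V → V → Prop) (u v : V) : Set V :=
  ⋂₀ {S | IsWalkSet A S ∧ u ∈ S ∧ v ∈ S}

lemma left_mem_walkHull (u v : V) : u ∈ walkHull A u v := fun _ hS => hS.2.1

lemma right_mem_walkHull (u v : V) : v ∈ walkHull A u v := fun _ hS => hS.2.2

namespace WalkHelly

lemma sInter_nonempty (hH : WalkHelly A) {𝒮 : Set (Set V)} (hne : 𝒮.Nonempty)
    (h𝒮 : ∀ S ∈ 𝒮, IsWalkSet A S) (hpair : 𝒮.Pairwise fun S S' => (S ∩ S').Nonempty) :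
    (⋂₀ 𝒮).Nonempty := by
  refine hH 𝒮 hne h𝒮 fun S hS S' hS' => ?_
  obtain rfl | hSS' := eq_or_ne S S'
  · simpa using (h𝒮 S hS).nonempty_s11
  · exact hpair hS hS' hSS'

lemma inter_inter_nonempty (hH : WalkHelly A) {S₁ S₂ S₃ : Set V} (h₁ : IsWalkSet A S₁)
    (h₂ : IsWalkSet A S₂) (h₃ : IsWalkSet A S₃) (h₁₂ : (S₁ ∩ S₂).Nonempty)
    (h₁₃ : (S₁ ∩ S₃).Nonempty) (h₂₃ : (S₂ ∩ S₃).Nonempty) : (S₁ ∩ S₂ ∩ S₃).Nonempty := by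
  obtain ⟨y, hy⟩ := hH.sInter_nonempty (𝒮 := {S₁, S₂, S₃}) (by simp) (by simp [h₁, h₂, h₃]) (by
    simp only [Set.pairwise_insert, Set.pairwise_singleton, Set.mem_insert_iff,
      Set.mem_singleton_iff, forall_eq_or_imp, forall_eq]
    simp_all [Set.inter_comm])
  exact ⟨y, ⟨hy S₁ (by simp), hy S₂ (by simp)⟩, hy S₃ (by simp)⟩

lemma isAcyclic_forcedGraph (hH : WalkHelly A) : (forcedGraph A).IsAcyclic := by
  intro v c hc
  cases c with
  | nil => exact hc.ne_nil rfl
  | @cons _ u _ huv q =>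
    have hlen := hc.three_le_length
    obtain ⟨hq, -⟩ := (SimpleGraph.Walk.cons_isCycle_iff q huv).mp hc
    cases q with
    | nil => simp at hlen
    | @cons _ z _ huz r =>
      obtain ⟨hr, hur⟩ := SimpleGraph.Walk.cons_isPath_iff huz r |>.mp hq
      have hr_nil : ¬ r.Nil := by
        simp only [SimpleGraph.Walk.length_cons] at hlen
        rw [SimpleGraph.Walk.not_nil_iff_lt_length]
        omega
      obtain ⟨y, ⟨hyvu, hyuz⟩, hyr⟩ := hH.inter_inter_nonempty (isWalkSet_pair huv.2.1 huv.2.2)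
        (isWalkSet_pair huz.2.1 huz.2.2) (isWalkSet_support_of_not_nil r hr_nil)
        ⟨u, by simp⟩ ⟨v, by simp⟩ ⟨z, by simp⟩
      have hyu : y ≠ u := fun h => hur (h ▸ hyr)
      obtain rfl : y = v := by simpa [hyu] using hyvu
      obtain rfl : y = z := by simpa [hyu] using hyuz
      exact hr_nil (SimpleGraph.Walk.isPath_iff_nil.mp hr)

lemma exists_walkHull_ssubset_of_not_isAuthorized (hH : WalkHelly A) {u v : V}
    (huv : ¬ IsAuthorized A u v) :
    ∃ y, walkHull A u y ⊂ walkHull A u v ∧ walkHull A y v ⊂ walkHull A u v := by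
  obtain ⟨x, ⟨S₁, hS₁, hu₁, hx₁, hv₁⟩, ⟨S₂, hS₂, hv₂, hx₂, hu₂⟩⟩ := not_not.mp huv
  obtain ⟨y, hy⟩ := hH.sInter_nonempty
    (𝒮 := insert S₁ (insert S₂ {S | IsWalkSet A S ∧ u ∈ S ∧ v ∈ S})) (by simp) (by
      rintro S (rfl | rfl | ⟨hS, -⟩) <;> assumption) (by
      refine .insert (.insert ?_ ?_) ?_
      · exact fun S hS S' hS' _ => ⟨u, hS.2.1, hS'.2.1⟩
      · exact fun S hS _ => ⟨⟨v, hv₂, hS.2.2⟩, ⟨v, hS.2.2, hv₂⟩⟩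
      · rintro S (rfl | hS) _
        · exact ⟨⟨x, hx₁, hx₂⟩, ⟨x, hx₂, hx₁⟩⟩
        · exact ⟨⟨u, hu₁, hS.2.1⟩, ⟨u, hS.2.1, hu₁⟩⟩)
  have hyS₁ : y ∈ S₁ := hy S₁ (by simp)
  have hyS₂ : y ∈ S₂ := hy S₂ (by simp)
  have hyHull : y ∈ walkHull A u v := fun S hS => hy S (by simp [hS])
  refine ⟨y, (Set.ssubset_iff_of_subset ?_).mpr ⟨v, right_mem_walkHull u v, ?_⟩,
    (Set.ssubset_iff_of_subset ?_).mpr ⟨u, left_mem_walkHull u v, ?_⟩⟩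
  · exact fun z hz S hS => hz S ⟨hS.1, hS.2.1, hyHull S hS⟩
  · exact fun hv => hv₁ (hv S₁ ⟨hS₁, hu₁, hyS₁⟩)
  · exact fun z hz S hS => hz S ⟨hS.1, hyHull S hS, hS.2.2⟩
  · exact fun hu => hu₂ (hu S₂ ⟨hS₂, hyS₂, hv₂⟩)

theorem reflTransGen_isAuthorized [Finite V] (hH : WalkHelly A) (u v : V) :
    Relation.ReflTransGen (IsAuthorized A) u v := by
  by_cases huv : IsAuthorized A u v
  · exact .single huv
  obtain ⟨y, huy, hyv⟩ := hH.exists_walkHull_ssubset_of_not_isAuthorized huv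
  exact (hH.reflTransGen_isAuthorized u y).trans (hH.reflTransGen_isAuthorized y v)
termination_by (walkHull A u v).ncard
decreasing_by
  · exact Set.ncard_lt_ncard huy
  · exact Set.ncard_lt_ncard hyv

lemma forcedGraph_connected [Finite V] [Nonempty V] (hH : WalkHelly A)
    (hA : ∀ u v, u ≠ v → IsAuthorized A u v → A u v) : (forcedGraph A).Connected := by
  refine ⟨fun u v => ?_⟩
  rw [SimpleGraph.reachable_iff_reflTransGen]
  refine (hH.reflTransGen_isAuthorized u v).lift' id fun a b hab => ?_
  obtain rfl | hne := eq_or_ne a b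
  · exact .refl
  · exact .single ⟨hne, hA a b hne hab, hA b a hne.symm hab.symm⟩

end WalkHelly

end

theorem stmt11_general {V : Type*} [Fintype V] [Nonempty V] (A : V → V → Prop)
    (hH : WalkHelly A)
    (htree : ¬ (forcedGraph A).IsTree) :
    ∃ u v : V, u ≠ v ∧ ¬ A u v ∧ IsAuthorized A u v := by
  by_contra! hA
  refine htree ⟨hH.forcedGraph_connected fun u v hne hauth => ?_, hH.isAcyclic_forcedGraph⟩
  exact not_not.mp (hA u v hne · hauth)

/-- if a strongly connected walk-Helly digraph's forced edges do not form
a spanning tree, then there is an authorized arc `(u, v)` that is not an arc of `A`. -/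
theorem stmt11 {V : Type*} [Fintype V] [Nonempty V] (A : V → V → Prop)
    (hstrong : ∀ u v : V, Relation.ReflTransGen A u v)
    (hH : WalkHelly A)
    (htree : ¬ (forcedGraph A).IsTree) :
    ∃ u v : V, u ≠ v ∧ ¬ A u v ∧ IsAuthorized A u v :=
  stmt11_general A hH htree
end

section
/- For every integer n ≥ 4 there exists a simple temporal graph 𝒢 = (V, ℰ) on n vertices with exactly 2n − 4 temporal edges that is temporally connected, i.e., for every ordered pair of distinct vertices u, v there is a journey from u to v in 𝒢. -/
/-! Common definitions: temporal (di)graphs, journeys, footprints,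
closed walks, the walk-Helly property, tree representations, etc. -/

variable {V : Type*}

/-! Two hubs `a`, `b` are joined to every other vertex `x`, by `{a, x}` at time `f x` and by
`{b, x}` at time `g x`. With `f` increasing and `g` decreasing along an ordering of the
leaves, a leaf reaches a later leaf through `a` and an earlier one through `b`; the hubs
reach each other through a leaf `x` with `f x < g x`, resp. `g x < f x`. On `Fin n` with
hubs `0`, `1` and times `f x = x - 1`, `g x = n - x`, the leaves `2` and `n - 1` serve
as such witnesses as soon as `n ≥ 4`, and there are `2 (n - 2)` edges. -/

def TemporallyConnected {V : Type*} (E : Set (Sym2 V × ℕ)) : Prop :=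
  ∀ u v : V, u ≠ v → Journey E u v

namespace Journey

variable {V : Type*} {E : Set (Sym2 V × ℕ)} {u v w : V} {t t' : ℕ}

theorem of_mem (h : (s(u, v), t) ∈ E) : Journey E u v := by
  refine ⟨1, fun i => if i = 0 then u else v, fun _ => t, le_rfl, rfl, rfl, ?_, by omega⟩
  intro i hi
  obtain rfl : i = 0 := by omega
  simpa using h

theorem of_mem_of_mem (h : (s(u, v), t) ∈ E) (h' : (s(v, w), t') ∈ E) (ht : t < t') :
    Journey E u w := by
  refine ⟨2, fun i => if i = 0 then u else if i = 1 then v else w,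
    fun i => if i = 0 then t else t', by omega, rfl, rfl, ?_, ?_⟩
  · intro i hi
    interval_cases i
    · simpa using h
    · simpa using h'
  · intro i hi
    obtain rfl : i = 0 := by omega
    simpa using ht

end Journey

section DoubleStar

variable {V : Type*} [Fintype V] [DecidableEq V] {a b : V} {f g : V → ℕ}

def doubleStar (a b : V) (f g : V → ℕ) : Finset (Sym2 V × ℕ) :=
  ({a, b}ᶜ : Finset V).image (fun x => (s(a, x), f x)) ∪
    ({a, b}ᶜ : Finset V).image (fun x => (s(b, x), g x))

theorem mem_doubleStar {e : Sym2 V × ℕ} :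
    e ∈ doubleStar a b f g ↔ ∃ x, x ≠ a ∧ x ≠ b ∧ (e = (s(a, x), f x) ∨ e = (s(b, x), g x)) := by
  simp only [doubleStar, Finset.mem_union, Finset.mem_image, Finset.mem_compl,
    Finset.mem_insert, Finset.mem_singleton, not_or]
  grind

theorem mem_doubleStar_left {x : V} (ha : x ≠ a) (hb : x ≠ b) :
    (s(a, x), f x) ∈ doubleStar a b f g :=
  mem_doubleStar.2 ⟨x, ha, hb, .inl rfl⟩

theorem mem_doubleStar_right {x : V} (ha : x ≠ a) (hb : x ≠ b) :
    (s(b, x), g x) ∈ doubleStar a b f g :=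
  mem_doubleStar.2 ⟨x, ha, hb, .inr rfl⟩

theorem validTemporal_doubleStar (hf : ∀ x, x ≠ a → x ≠ b → 1 ≤ f x)
    (hg : ∀ x, x ≠ a → x ≠ b → 1 ≤ g x) : ValidTemporal (doubleStar a b f g) := by
  intro e he
  obtain ⟨x, ha, hb, rfl | rfl⟩ := mem_doubleStar.1 he
  · exact ⟨by simpa using ha.symm, hf x ha hb⟩
  · exact ⟨by simpa using hb.symm, hg x ha hb⟩

theorem doubleStar_injOn_fst (hab : a ≠ b) :
    Set.InjOn Prod.fst (doubleStar a b f g : Set (Sym2 V × ℕ)) := by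
  intro e₁ h₁ e₂ h₂ heq
  obtain ⟨x, hxa, hxb, rfl | rfl⟩ := mem_doubleStar.1 h₁ <;>
    obtain ⟨y, hya, hyb, rfl | rfl⟩ := mem_doubleStar.1 h₂ <;>
    simp_all [Ne.symm]

theorem card_doubleStar (hab : a ≠ b) :
    (doubleStar a b f g).card = 2 * (Fintype.card V - 2) := by
  have hinj (c : V) (hc : c = a ∨ c = b) (k : V → ℕ) :
      Set.InjOn (fun x => (s(c, x), k x)) ({a, b}ᶜ : Finset V) := by
    intro x hx y hy hxy
    aesop
  rw [doubleStar, Finset.card_union_of_disjoint, Finset.card_image_of_injOn (hinj a (.inl rfl) f),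
    Finset.card_image_of_injOn (hinj b (.inr rfl) g), Finset.card_compl, Finset.card_pair hab]
  · omega
  · simp only [Finset.disjoint_left, Finset.mem_image]
    aesop

theorem temporallyConnected_doubleStar
    (hleaves : ∀ x y, x ≠ a → x ≠ b → y ≠ a → y ≠ b → x ≠ y → f x < f y ∨ g x < g y)
    (hfg : ∃ x, x ≠ a ∧ x ≠ b ∧ f x < g x) (hgf : ∃ x, x ≠ a ∧ x ≠ b ∧ g x < f x) :
    TemporallyConnected (doubleStar a b f g : Set (Sym2 V × ℕ)) := by
  have toA {x : V} (ha : x ≠ a) (hb : x ≠ b) : (s(x, a), f x) ∈ doubleStar a b f g := by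
    rw [Sym2.eq_swap]; exact mem_doubleStar_left ha hb
  have toB {x : V} (ha : x ≠ a) (hb : x ≠ b) : (s(x, b), g x) ∈ doubleStar a b f g := by
    rw [Sym2.eq_swap]; exact mem_doubleStar_right ha hb
  intro u v huv
  rcases eq_or_ne u a with rfl | hua
  · rcases eq_or_ne v b with rfl | hvb
    · obtain ⟨x, hxa, hxb, hx⟩ := hfg
      exact .of_mem_of_mem (mem_doubleStar_left hxa hxb) (toB hxa hxb) hx
    · exact .of_mem (mem_doubleStar_left huv.symm hvb)
  rcases eq_or_ne u b with rfl | hub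
  · rcases eq_or_ne v a with rfl | hva
    · obtain ⟨x, hxa, hxb, hx⟩ := hgf
      exact .of_mem_of_mem (mem_doubleStar_right hxa hxb) (toA hxa hxb) hx
    · exact .of_mem (mem_doubleStar_right hva huv.symm)
  rcases eq_or_ne v a with rfl | hva
  · exact .of_mem (toA hua hub)
  rcases eq_or_ne v b with rfl | hvb
  · exact .of_mem (toB hua hub)
  rcases hleaves u v hua hub hva hvb huv with h | h
  · exact .of_mem_of_mem (toA hua hub) (mem_doubleStar_left hva hvb) h
  · exact .of_mem_of_mem (toB hua hub) (mem_doubleStar_right hva hvb) h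

end DoubleStar

/-- for every `n ≥ 4` there is a simple temporal graph on `n` vertices
with exactly `2n - 4` temporal edges that is temporally connected. -/
theorem stmt16 (n : ℕ) (hn : 4 ≤ n) :
    ∃ E : Finset (Sym2 (Fin n) × ℕ),
      ValidTemporal E ∧
      (∀ e₁ ∈ E, ∀ e₂ ∈ E, (e₁ : Sym2 (Fin n) × ℕ).1 = e₂.1 → e₁ = e₂) ∧
      E.card = 2 * n - 4 ∧
      ∀ u v : Fin n, u ≠ v → Journey (↑E : Set (Sym2 (Fin n) × ℕ)) u v := by
  obtain ⟨m, rfl⟩ := Nat.exists_eq_add_of_le' hn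
  have hleaf {x : Fin (m + 4)} (ha : x ≠ 0) (hb : x ≠ 1) : 2 ≤ x.val := by
    simp only [ne_eq, Fin.ext_iff, Fin.val_zero, Fin.val_one] at ha hb
    omega
  refine ⟨doubleStar 0 1 (fun x => x.val - 1) (fun x => m + 4 - x.val), ?_,
    doubleStar_injOn_fst zero_ne_one, ?_, temporallyConnected_doubleStar ?_
      ⟨⟨2, by omega⟩, by simp [Fin.ext_iff], by simp [Fin.ext_iff], by simp⟩
      ⟨Fin.last _, by simp [Fin.ext_iff], by simp [Fin.ext_iff], by simp⟩⟩
  · exact validTemporal_doubleStar (fun x ha hb => by have := hleaf ha hb; omega)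
      (fun x _ _ => by omega)
  · rw [card_doubleStar zero_ne_one, Fintype.card_fin]
    omega
  · intro x y hxa hxb hya hyb hxy
    have := hleaf hxa hxb
    have := hleaf hya hyb
    have := Fin.val_ne_of_ne hxy
    omega
end
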